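/- If i : C → D is a G-equivariant Dwyer map and T is a small category with a right G-action, then Fun(T,i) : Fun(T,C) → Fun(T,D) is a G-equivariant Dwyer map, where G acts on functor categories by conjugation. -/

import Mathlib

open CategoryTheory

universe u

namespace GGlobal

/-- A strict action of a group (or monoid) `G` on a category `C`, given by a monoid
homomorphism into the endomorphism monoid of `C` in `Cat`. -/
abbrev GAct (G : Type u) [Monoid G] (C : Type u) [Category.{u} C] : Type u :=
  G →* CategoryTheory.End (Cat.of C)

variable {G : Type u} [Group G] {C D : Type u} [Category.{u} C] [Category.{u} D]

/-- A functor is strictly `G`-equivariant. -/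
def EquivFun (ρC : GAct G C) (ρD : GAct G D) (F : C ⥤ D) : Prop :=
  ∀ g : G, ((ρC g).toFunctor : C ⥤ C) ⋙ F = F ⋙ ((ρD g).toFunctor : D ⥤ D)

/-- The `H`-fixed points of a `G`-category: objects fixed by all of `H`. -/
structure Fixed (ρ : GAct G C) (H : Subgroup G) : Type u where
  obj : C
  fixed : ∀ h ∈ H, (((ρ h).toFunctor : C ⥤ C)).obj obj = obj

instance {ρ : GAct G C} {H : Subgroup G} : Category.{u} (Fixed ρ H) where
  Hom x y := { φ : x.obj ⟶ y.obj //
    ∀ h (hh : h ∈ H), ((ρ h).toFunctor : C ⥤ C).map φ =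
      eqToHom (x.fixed h hh) ≫ φ ≫ eqToHom (y.fixed h hh).symm }
  id x := ⟨𝟙 x.obj, by
    intro h hh
    have key : ∀ (F : C ⥤ C) (a : C) (p : F.obj a = a),
        F.map (𝟙 a) = eqToHom p ≫ 𝟙 a ≫ eqToHom p.symm := by
      intros; simp
    exact key _ _ _⟩
  comp f g := ⟨f.1 ≫ g.1, by
    intro h hh
    have key : ∀ (F : C ⥤ C) {a b c : C} (φ : a ⟶ b) (ψ : b ⟶ c) (pa : F.obj a = a)
        (pb : F.obj b = b) (pc : F.obj c = c),
        F.map φ = eqToHom pa ≫ φ ≫ eqToHom pb.symm →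
        F.map ψ = eqToHom pb ≫ ψ ≫ eqToHom pc.symm →
        F.map (φ ≫ ψ) = eqToHom pa ≫ (φ ≫ ψ) ≫ eqToHom pc.symm := by
      intro F a b c φ ψ pa pb pc h1 h2
      rw [Functor.map_comp, h1, h2]
      simp
    rename_i X Y Z
    exact key _ _ _ _ _ (Z.fixed h hh) (f.2 h hh) (g.2 h hh)⟩
  id_comp f := Subtype.ext (by simp)
  comp_id f := Subtype.ext (by simp)
  assoc f g h := Subtype.ext (by simp)

/-- The functor induced on `H`-fixed points by a strictly equivariant functor. -/
def FixedFunctor (ρC : GAct G C) (ρD : GAct G D) (i : C ⥤ D) (hi : EquivFun ρC ρD i)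
    (H : Subgroup G) : Fixed ρC H ⥤ Fixed ρD H where
  obj x := ⟨i.obj x.obj, fun h hh => by
    have := Functor.congr_obj (hi h) x.obj
    exact this.symm.trans (congrArg i.obj (x.fixed h hh))⟩
  map {x y} φ := ⟨i.map φ.1, fun h hh => by
    have key : ∀ (FC : C ⥤ C) (FD : D ⥤ D) (e : FC ⋙ i = i ⋙ FD) {a b : C} (φ : a ⟶ b)
        (pa : FC.obj a = a) (pb : FC.obj b = b) (qa : FD.obj (i.obj a) = i.obj a)
        (qb : FD.obj (i.obj b) = i.obj b),
        FC.map φ = eqToHom pa ≫ φ ≫ eqToHom pb.symm →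
        FD.map (i.map φ) = eqToHom qa ≫ i.map φ ≫ eqToHom qb.symm := by
      intro FC FD e a b φ pa pb qa qb hφ
      have h2 := Functor.congr_hom e.symm φ
      simp only [Functor.comp_obj, Functor.comp_map] at h2
      rw [h2, hφ]
      simp [eqToHom_map]
    refine key _ _ (hi h) φ.1 _ (y.fixed h hh) ?_ ?_ (φ.2 h hh)
    · exact (Functor.congr_obj (hi h) y.obj).symm.trans (congrArg i.obj (y.fixed h hh))⟩
  map_id x := Subtype.ext (by exact i.map_id x.obj)
  map_comp f g := Subtype.ext (by exact i.map_comp f.1 g.1)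

/-- A functor is a sieve inclusion: fully faithful, injective on objects, and closed
under precomposition: any morphism of `D` with target in the image lies in the image. -/
structure IsSieve (i : C ⥤ D) : Prop where
  full : i.Full
  faithful : i.Faithful
  injObj : Function.Injective i.obj
  closed : ∀ {c : C} {d : D}, (d ⟶ i.obj c) → ∃ c', i.obj c' = d

/-- A functor is a cosieve inclusion: fully faithful, injective on objects, and closed
under postcomposition: any morphism of `D` with source in the image lies in the image. -/
structure IsCosieve (i : C ⥤ D) : Prop where
  full : i.Full
  faithful : i.Faithful
  injObj : Function.Injective i.obj
  closed : ∀ {c : C} {d : D}, (i.obj c ⟶ d) → ∃ c', i.obj c' = d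

/-- A Dwyer map: a sieve admitting a factorization through a cosieve by a functor
admitting a right adjoint. -/
def IsDwyer (i : C ⥤ D) : Prop :=
  IsSieve i ∧ ∃ (X : Cat.{u, u}) (f : C ⥤ X) (j : X ⥤ D),
    i = f ⋙ j ∧ IsCosieve j ∧ ∃ r : X ⥤ C, Nonempty (f ⊣ r)

/-- A `G`-equivariant Dwyer map: an equivariant sieve admitting an equivariant
factorization through an equivariant cosieve by an equivariant functor admitting a
`G`-equivariant right adjoint (with equivariant unit and counit). -/
def IsGDwyer (ρC : GAct G C) (ρD : GAct G D) (i : C ⥤ D) : Prop :=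
  IsSieve i ∧ EquivFun ρC ρD i ∧
    ∃ (X : Cat.{u, u}) (ρX : GAct G X) (f : C ⥤ X) (j : X ⥤ D),
      i = f ⋙ j ∧ EquivFun ρC ρX f ∧ EquivFun ρX ρD j ∧ IsCosieve j ∧
        ∃ (r : X ⥤ C) (adj : f ⊣ r), EquivFun ρX ρC r ∧
          (∀ (g : G) (c : C),
            HEq (((ρC g).toFunctor : C ⥤ C).map (adj.unit.app c)) (adj.unit.app (((ρC g).toFunctor : C ⥤ C).obj c))) ∧
          (∀ (g : G) (x : X),
            HEq (((ρX g).toFunctor : X ⥤ X).map (adj.counit.app x)) (adj.counit.app (((ρX g).toFunctor : X ⥤ X).obj x)))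

end GGlobal

open GGlobal

/-! Everything is checked pointwise in `T`. Postcomposition with a fully faithful functor that is
injective on objects is again such, and a functor `K : T ⥤ D` all of whose values lie in a
(co)sieve lifts through it, so `Fun(T, -)` preserves sieves and cosieves. The factorization
`i = f ⋙ j` and the adjunction `f ⊣ r` whisker to `T`, with `Fun(T, X)` acted on by conjugation.
Equivariance survives whiskering because postcomposing with `u` commutes strictly with
precomposing by the action on `T`, so it reduces to the equivariance of `u`, and of the
components of the unit and counit. -/

namespace CategoryTheory.Adjunction

variable {T A B : Type u} [Category.{u} T] [Category.{u} A] [Category.{u} B]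
  {f : A ⥤ B} {r : B ⥤ A}

lemma whiskerRight_unit (adj : f ⊣ r) :
    (adj.whiskerRight T).unit = (Functor.whiskeringRight T A A).map adj.unit := by
  ext; simp

lemma whiskerRight_counit (adj : f ⊣ r) :
    (adj.whiskerRight T).counit = (Functor.whiskeringRight T B B).map adj.counit := by
  ext; simp

end CategoryTheory.Adjunction

namespace GGlobal

variable {G : Type u} [Group G] {T A B E : Type u}
  [Category.{u} T] [Category.{u} A] [Category.{u} B] [Category.{u} E]

lemma EquivFun.id (ρA : GAct G A) : EquivFun ρA ρA (𝟭 A) := fun _ => rfl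

lemma EquivFun.comp {ρA : GAct G A} {ρB : GAct G B} {ρE : GAct G E} {F : A ⥤ B} {H : B ⥤ E}
    (hF : EquivFun ρA ρB F) (hH : EquivFun ρB ρE H) : EquivFun ρA ρE (F ⋙ H) := fun g =>
  (congrArg (· ⋙ H) (hF g)).trans (congrArg (F ⋙ ·) (hH g))

def EquivNatTrans (ρA : GAct G A) (ρB : GAct G B) {P Q : A ⥤ B} (η : P ⟶ Q) : Prop :=
  ∀ (g : G) (a : A), HEq (((ρB g).toFunctor : B ⥤ B).map (η.app a))
    (η.app (((ρA g).toFunctor : A ⥤ A).obj a))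

lemma natTrans_hext {F₁ F₂ F₁' F₂' : T ⥤ A} (h₁ : F₁ = F₁') (h₂ : F₂ = F₂')
    (α : F₁ ⟶ F₂) (α' : F₁' ⟶ F₂') (h : ∀ t, HEq (α.app t) (α'.app t)) : HEq α α' := by
  subst h₁ h₂
  exact heq_of_eq (NatTrans.ext (funext fun t => eq_of_heq (h t)))

lemma injective_whiskeringRight_obj_obj (i : A ⥤ B) [i.Faithful]
    (hinj : Function.Injective i.obj) :
    Function.Injective ((Functor.whiskeringRight T A B).obj i).obj := by
  intro F F' h
  have hobj (t : T) : F.obj t = F'.obj t := hinj (Functor.congr_obj h t)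
  refine CategoryTheory.Functor.ext hobj fun t t' φ => i.map_injective ?_
  simp only [Functor.map_comp, eqToHom_map]
  exact Functor.congr_hom h φ

lemma exists_comp_eq_of_forall_obj (i : A ⥤ B) [i.Full] [i.Faithful] (K : T ⥤ B)
    (hK : ∀ t, ∃ a, i.obj a = K.obj t) : ∃ L : T ⥤ A, L ⋙ i = K := by
  choose c hc using hK
  refine ⟨{ obj := c
            map := fun {t t'} φ => i.preimage (eqToHom (hc t) ≫ K.map φ ≫ eqToHom (hc t').symm)
            map_id := fun t => i.map_injective (by simp)
            map_comp := fun φ ψ => i.map_injective (by simp) }, ?_⟩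
  exact CategoryTheory.Functor.ext hc fun t t' φ => by simp

lemma IsSieve.whiskeringRight {i : A ⥤ B} (hi : IsSieve i) :
    IsSieve ((Functor.whiskeringRight T A B).obj i) := by
  have := hi.full
  have := hi.faithful
  refine ⟨inferInstance, inferInstance, injective_whiskeringRight_obj_obj i hi.injObj, ?_⟩
  intro F K α
  exact exists_comp_eq_of_forall_obj i K fun t => hi.closed (α.app t)

lemma IsCosieve.whiskeringRight {i : A ⥤ B} (hi : IsCosieve i) :
    IsCosieve ((Functor.whiskeringRight T A B).obj i) := by
  have := hi.full
  have := hi.faithful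
  refine ⟨inferInstance, inferInstance, injective_whiskeringRight_obj_obj i hi.injObj, ?_⟩
  intro F K α
  exact exists_comp_eq_of_forall_obj i K fun t => hi.closed (α.app t)

section Conjugation

variable (ρT : GAct Gᵐᵒᵖ T)

def IsConjAct (ρA : GAct G A) (ρFA : GAct G (T ⥤ A)) : Prop :=
  ∀ g : G, ((ρFA g).toFunctor : (T ⥤ A) ⥤ (T ⥤ A)) =
    (Functor.whiskeringLeft T T A).obj ((ρT (MulOpposite.op g)).toFunctor : T ⥤ T) ⋙
      (Functor.whiskeringRight T A A).obj ((ρA g).toFunctor : A ⥤ A)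

def conjAct (ρA : GAct G A) : GAct G (T ⥤ A) where
  toFun g := Functor.toCatHom
    ((Functor.whiskeringLeft T T A).obj ((ρT (MulOpposite.op g)).toFunctor : T ⥤ T) ⋙
      (Functor.whiskeringRight T A A).obj ((ρA g).toFunctor : A ⥤ A))
  map_one' := by simp only [MulOpposite.op_one, map_one]; rfl
  map_mul' g h := by simp only [MulOpposite.op_mul, map_mul]; rfl

lemma isConjAct_conjAct (ρA : GAct G A) : IsConjAct ρT ρA (conjAct ρT ρA) := fun _ => rfl

variable {ρT} {ρA : GAct G A} {ρB : GAct G B} {ρFA : GAct G (T ⥤ A)} {ρFB : GAct G (T ⥤ B)}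

lemma EquivFun.whiskeringRight (hFA : IsConjAct ρT ρA ρFA) (hFB : IsConjAct ρT ρB ρFB)
    {u : A ⥤ B} (hu : EquivFun ρA ρB u) :
    EquivFun ρFA ρFB ((Functor.whiskeringRight T A B).obj u) := fun g => by
  rw [hFA g, hFB g]
  exact congrArg (fun Φ => (Functor.whiskeringLeft T T A).obj
    ((ρT (MulOpposite.op g)).toFunctor : T ⥤ T) ⋙ (Functor.whiskeringRight T A B).obj Φ) (hu g)

lemma EquivNatTrans.whiskeringRight (hFA : IsConjAct ρT ρA ρFA) (hFB : IsConjAct ρT ρB ρFB)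
    {P Q : A ⥤ B} (hP : EquivFun ρA ρB P) (hQ : EquivFun ρA ρB Q) {η : P ⟶ Q}
    (hη : EquivNatTrans ρA ρB η) :
    EquivNatTrans ρFA ρFB ((Functor.whiskeringRight T A B).map η) := fun g F => by
  have hPF := Functor.congr_obj ((hP.whiskeringRight hFA hFB) g) F
  have hQF := Functor.congr_obj ((hQ.whiskeringRight hFA hFB) g) F
  rw [hFA g, hFB g] at hPF hQF ⊢
  exact natTrans_hext hPF.symm hQF.symm _ _ fun t => hη g _

end Conjugation

end GGlobal

/-- If `i : C → D` is a `G`-equivariant Dwyer map and `T` is a small category with a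
right `G`-action, then `Fun(T, i) : Fun(T, C) → Fun(T, D)` is a `G`-equivariant Dwyer
map, where `G` acts on the functor categories by conjugation:
`(g.F)(t) = g.F(t.g)`. -/
theorem fun_isGDwyer
    {G : Type u} [Group G] {T C D : Type u}
    [Category.{u} T] [Category.{u} C] [Category.{u} D]
    (ρT : GAct Gᵐᵒᵖ T)  -- a right `G`-action on `T`
    (ρC : GAct G C) (ρD : GAct G D)
    (i : C ⥤ D) (hDwyer : IsGDwyer ρC ρD i)
    (ρFC : GAct G (T ⥤ C)) (ρFD : GAct G (T ⥤ D))
    (hFC : ∀ g : G, ((ρFC g).toFunctor : (T ⥤ C) ⥤ (T ⥤ C)) =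
      (Functor.whiskeringLeft T T C).obj ((ρT (MulOpposite.op g)).toFunctor : T ⥤ T) ⋙
        (Functor.whiskeringRight T C C).obj ((ρC g).toFunctor : C ⥤ C))
    (hFD : ∀ g : G, ((ρFD g).toFunctor : (T ⥤ D) ⥤ (T ⥤ D)) =
      (Functor.whiskeringLeft T T D).obj ((ρT (MulOpposite.op g)).toFunctor : T ⥤ T) ⋙
        (Functor.whiskeringRight T D D).obj ((ρD g).toFunctor : D ⥤ D)) :
    IsGDwyer ρFC ρFD ((Functor.whiskeringRight T C D).obj i) := by
  obtain ⟨hsieve, hi, X, ρX, f, j, rfl, hf, hj, hjcos, r, adj, hr, hunit, hcounit⟩ := hDwyer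
  have hFX := isConjAct_conjAct ρT ρX
  refine ⟨hsieve.whiskeringRight, hi.whiskeringRight hFC hFD, Cat.of (T ⥤ X), conjAct ρT ρX,
    (Functor.whiskeringRight T C X).obj f, (Functor.whiskeringRight T X D).obj j, rfl,
    hf.whiskeringRight hFC hFX, hj.whiskeringRight hFX hFD, hjcos.whiskeringRight,
    (Functor.whiskeringRight T X C).obj r, adj.whiskerRight T, hr.whiskeringRight hFX hFC,
    ?_, ?_⟩
  · rw [Adjunction.whiskerRight_unit]
    exact EquivNatTrans.whiskeringRight hFC hFC (EquivFun.id ρC) (hf.comp hr) hunit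
  · rw [Adjunction.whiskerRight_counit]
    exact EquivNatTrans.whiskeringRight hFX hFX (hr.comp hf) (EquivFun.id ρX) hcounit
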